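/- arXiv:1702.06686 — 2 statements merged into one kernel-verified Lean document; each statement's English description precedes it below -/
import Mathlib

section
/- For all integers g₁, g₂ ≥ 3, the coefficient of X² in the polynomial representing P₁₂(g₁,g₂) is 3; that is, the second Betti number of the component M₁₂ equals 3. -/
open Polynomial

/-- `Q_g = ((1+X³)^{2g} − X^{2g}(1+X)^{2g}) / ((1−X²)(1−X⁴))` in `ℚ(X)`:
the Harder–Narasimhan Poincaré polynomial of the moduli space of rank-2 stable
bundles of fixed odd-degree determinant on a smooth projective curve of genus `g`. -/
noncomputable def Qg (g : ℕ) : RatFunc ℚ :=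
  ((1 + RatFunc.X ^ 3) ^ (2 * g) - RatFunc.X ^ (2 * g) * (1 + RatFunc.X) ^ (2 * g)) /
    ((1 - RatFunc.X ^ 2) * (1 - RatFunc.X ^ 4))

/-- `J_g = (1+X)^{2g}`, the Poincaré polynomial of the Jacobian. -/
noncomputable def Jg (g : ℕ) : RatFunc ℚ := (1 + RatFunc.X) ^ (2 * g)

/-- `Pⁿ = 1 + X² + ⋯ + X^{2n}`, the Poincaré polynomial of `ℙⁿ`. -/
noncomputable def Pn (n : ℕ) : RatFunc ℚ := ∑ i ∈ Finset.range (n + 1), RatFunc.X ^ (2 * i)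

/-- `K_g = 1 + X^{2g} + Σ_{0<i<2g, i even} (C(2g,i) + 2^{2g}) X^i`,
the Poincaré polynomial of the desingularized Kummer variety. -/
noncomputable def Kg (g : ℕ) : RatFunc ℚ :=
  1 + RatFunc.X ^ (2 * g) +
    ∑ i ∈ (Finset.Ioo 0 (2 * g)).filter (fun i => Even i),
      (((2 * g).choose i : RatFunc ℚ) + 2 ^ (2 * g)) * RatFunc.X ^ i

/-- `β̃₁` from Theorem 4.2 of the paper. -/
noncomputable def betaT1 (g₂ : ℕ) : RatFunc ℚ :=
  Kg g₂ * RatFunc.X ^ (4 * g₂ - 4) / (1 + RatFunc.X ^ 2) +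
    Jg g₂ * (RatFunc.X ^ (4 * g₂ - 2) / (1 - RatFunc.X ^ 4) +
      Pn (g₂ - 2) * RatFunc.X ^ (2 * g₂ - 2)) -
    2 ^ (2 * g₂) * Pn (g₂ - 1) * RatFunc.X ^ (4 * g₂ - 2) / (1 + RatFunc.X ^ 2) -
    2 ^ (2 * g₂) * (RatFunc.X ^ (6 * g₂ - 2) / (1 - RatFunc.X ^ 4) +
      Pn (g₂ - 2) * RatFunc.X ^ (4 * g₂ - 2))

/-- `β̃₂` from Theorem 4.2 of the paper. -/
noncomputable def betaT2 (g₂ : ℕ) : RatFunc ℚ :=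
  2 ^ (2 * g₂) * (RatFunc.X ^ (6 * g₂) / (1 - RatFunc.X ^ 4) +
    RatFunc.X ^ (4 * g₂ - 2) * Pn (g₂ - 1))

/-- `P₁₂(g₁,g₂) ∈ ℚ(X)`, the Poincaré polynomial of the component `M₁₂` of the moduli
space of rank-2 stable torsion-free sheaves with fixed determinant on a nodal curve
`X₁ ∪ X₂` whose smooth components have genera `g₁, g₂` (Theorem 4.2 of the paper). -/
noncomputable def P12 (g₁ g₂ : ℕ) : RatFunc ℚ :=
  Qg g₁ * (1 - RatFunc.X ^ 4) *
      (Qg g₂ + Jg g₂ * RatFunc.X ^ (2 * g₂) / (1 - RatFunc.X ^ 4) - (betaT1 g₂ + betaT2 g₂)) +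
    Qg g₁ * 2 ^ (2 * g₂) *
      (RatFunc.X ^ (6 * g₂) + RatFunc.X ^ (4 * g₂ - 2) * (1 - RatFunc.X ^ 4) * Pn (g₂ - 1)) +
    Qg g₁ *
      (Kg g₂ * RatFunc.X ^ (4 * g₂ - 4) * (1 - RatFunc.X ^ 2) +
        Jg g₂ * (RatFunc.X ^ (4 * g₂ - 2) +
          RatFunc.X ^ (2 * g₂ - 2) * (1 - RatFunc.X ^ 4) * Pn (g₂ - 2)) -
        2 ^ (2 * g₂) *
          (RatFunc.X ^ (6 * g₂ - 2) +
            RatFunc.X ^ (4 * g₂ - 2) * (1 - RatFunc.X ^ 4) * Pn (g₂ - 2) +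
            RatFunc.X ^ (4 * g₂ - 2) * (1 - RatFunc.X ^ 2) * Pn (g₂ - 1))) +
    Qg g₁ * Qg g₂ * RatFunc.X ^ 2 * (1 + 2 * RatFunc.X ^ 2 + RatFunc.X ^ 4)


section Aux

lemma one_sub_X4_ne : (1 - RatFunc.X ^ 4 : RatFunc ℚ) ≠ 0 := by
  have h : (1 - RatFunc.X ^ 4 : RatFunc ℚ)
      = algebraMap ℚ[X] (RatFunc ℚ) (1 - X ^ 4) := by
    simp [map_sub, map_pow, RatFunc.algebraMap_X]
  rw [h]
  apply RatFunc.algebraMap_ne_zero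
  intro hc
  have := congrArg (fun q => Polynomial.coeff q 0) hc
  simp [Polynomial.coeff_one] at this

set_option maxHeartbeats 1000000 in
lemma lemmaA (g₁ g₂ : ℕ) :
    P12 g₁ g₂ = Qg g₁ * ((1 - RatFunc.X ^ 4) * Qg g₂ + Jg g₂ * RatFunc.X ^ (2 * g₂)
      + Qg g₂ * RatFunc.X ^ 2 * (1 + 2 * RatFunc.X ^ 2 + RatFunc.X ^ 4)) := by
  have h1 : (1 - RatFunc.X ^ 4 : RatFunc ℚ) ≠ 0 := one_sub_X4_ne
  have h2 : (1 + RatFunc.X ^ 2 : RatFunc ℚ) ≠ 0 := by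
    have h : (1 + RatFunc.X ^ 2 : RatFunc ℚ)
        = algebraMap ℚ[X] (RatFunc ℚ) (1 + X ^ 2) := by
      simp [map_add, map_pow, RatFunc.algebraMap_X]
    rw [h]
    apply RatFunc.algebraMap_ne_zero
    intro hc
    have := congrArg (fun q => Polynomial.coeff q 0) hc
    simp [Polynomial.coeff_one] at this
  have hb1 : (1 - RatFunc.X ^ 4) * betaT1 g₂ =
      Kg g₂ * RatFunc.X ^ (4 * g₂ - 4) * (1 - RatFunc.X ^ 2) +
        Jg g₂ * (RatFunc.X ^ (4 * g₂ - 2) +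
          (1 - RatFunc.X ^ 4) * Pn (g₂ - 2) * RatFunc.X ^ (2 * g₂ - 2)) -
        2 ^ (2 * g₂) * Pn (g₂ - 1) * RatFunc.X ^ (4 * g₂ - 2) * (1 - RatFunc.X ^ 2) -
        2 ^ (2 * g₂) * (RatFunc.X ^ (6 * g₂ - 2) +
          (1 - RatFunc.X ^ 4) * Pn (g₂ - 2) * RatFunc.X ^ (4 * g₂ - 2)) := by
    unfold betaT1
    field_simp
    ring
  have hb2 : (1 - RatFunc.X ^ 4) * betaT2 g₂ =
      2 ^ (2 * g₂) * (RatFunc.X ^ (6 * g₂) +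
        (1 - RatFunc.X ^ 4) * RatFunc.X ^ (4 * g₂ - 2) * Pn (g₂ - 1)) := by
    unfold betaT2
    linear_combination (2 : RatFunc ℚ) ^ (2 * g₂) *
      (div_mul_cancel₀ (RatFunc.X ^ (6 * g₂) : RatFunc ℚ) h1)
  have hJ : (1 - RatFunc.X ^ 4) * (Jg g₂ * RatFunc.X ^ (2 * g₂) / (1 - RatFunc.X ^ 4))
      = Jg g₂ * RatFunc.X ^ (2 * g₂) := by
    field_simp
  unfold P12
  linear_combination Qg g₁ * hJ - Qg g₁ * hb1 - Qg g₁ * hb2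

/-- Numerator of `Qg`. -/
noncomputable def qnum (g : ℕ) : ℚ[X] :=
  (1 + X ^ 3) ^ (2 * g) - X ^ (2 * g) * (1 + X) ^ (2 * g)

/-- Denominator of `Qg`. -/
noncomputable def qden : ℚ[X] := (1 - X ^ 2) * (1 - X ^ 4)

/-- `Qg` as a polynomial. -/
noncomputable def qpoly (g : ℕ) : ℚ[X] := qnum g / qden

lemma qden_ne_zero : (qden : ℚ[X]) ≠ 0 := by
  intro h
  have := congrArg (fun q => Polynomial.coeff q 0) h
  rw [show (qden : ℚ[X]) = 1 - X ^ 2 - X ^ 4 + X ^ 6 from by unfold qden; ring] at this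
  simp [Polynomial.coeff_one, Polynomial.coeff_X_pow] at this

lemma qden_dvd (g : ℕ) (hg : 1 ≤ g) : qden ∣ qnum g := by
  have hdvd1 : ((1 : ℚ[X]) - X) ^ 2 * (1 + X ^ 2) ∣ (1 - X + X ^ 2) ^ (2 * g) - X ^ (2 * g) := by
    have h := sub_dvd_pow_sub_pow ((1 - X + X ^ 2 : ℚ[X]) ^ 2) ((X : ℚ[X]) ^ 2) g
    rw [show ((1 - X + X ^ 2 : ℚ[X]) ^ 2 - (X : ℚ[X]) ^ 2)
      = (1 - X) ^ 2 * (1 + X ^ 2) from by ring] at h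
    rw [← pow_mul, ← pow_mul] at h
    exact h
  have hdvd2 : ((1 : ℚ[X]) + X) ^ 2 ∣ (1 + X) ^ (2 * g) := pow_dvd_pow _ (by omega)
  have e2 : qnum g = (1 + X) ^ (2 * g) * ((1 - X + X ^ 2) ^ (2 * g) - X ^ (2 * g)) := by
    unfold qnum
    rw [show ((1 : ℚ[X]) + X ^ 3) = (1 + X) * (1 - X + X ^ 2) from by ring, mul_pow]
    ring
  have e3 : qden = (1 + X) ^ 2 * ((1 - X) ^ 2 * (1 + X ^ 2)) := by unfold qden; ring
  rw [e2, e3]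
  exact mul_dvd_mul hdvd2 hdvd1

lemma qden_mul (g : ℕ) (hg : 1 ≤ g) : qden * qpoly g = qnum g :=
  EuclideanDomain.mul_div_cancel' qden_ne_zero (qden_dvd g hg)

lemma Qg_eq (g : ℕ) (hg : 1 ≤ g) :
    Qg g = algebraMap ℚ[X] (RatFunc ℚ) (qpoly g) := by
  have hden : algebraMap ℚ[X] (RatFunc ℚ) qden ≠ 0 :=
    RatFunc.algebraMap_ne_zero qden_ne_zero
  have h : Qg g = algebraMap ℚ[X] (RatFunc ℚ) (qnum g) / algebraMap ℚ[X] (RatFunc ℚ) qden := by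
    unfold Qg qnum qden
    simp [map_sub, map_add, map_mul, map_pow, map_one, RatFunc.algebraMap_X]
  rw [h, ← qden_mul g hg, map_mul, mul_div_cancel_left₀ _ hden]

lemma coeff_mul_one' (p q : ℚ[X]) :
    (p * q).coeff 1 = p.coeff 0 * q.coeff 1 + p.coeff 1 * q.coeff 0 := by
  rw [Polynomial.coeff_mul, Finset.Nat.sum_antidiagonal_eq_sum_range_succ_mk]
  simp [Finset.sum_range_succ]

lemma coeff_mul_two' (p q : ℚ[X]) :
    (p * q).coeff 2 = p.coeff 0 * q.coeff 2 + p.coeff 1 * q.coeff 1 + p.coeff 2 * q.coeff 0 := by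
  rw [Polynomial.coeff_mul, Finset.Nat.sum_antidiagonal_eq_sum_range_succ_mk]
  simp [Finset.sum_range_succ]

lemma qnum_coeff (g : ℕ) (hg : 3 ≤ g) :
    (qnum g).coeff 0 = 1 ∧ (qnum g).coeff 1 = 0 ∧ (qnum g).coeff 2 = 0 := by
  have h1 : (X : ℚ[X]) ^ 3 ∣ (1 + X ^ 3) ^ (2 * g) - 1 := by
    have h := sub_dvd_pow_sub_pow ((1 : ℚ[X]) + X ^ 3) 1 (2 * g)
    rw [show ((1 : ℚ[X]) + X ^ 3) - 1 = X ^ 3 from by ring, one_pow] at h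
    exact h
  have h2 : (X : ℚ[X]) ^ 3 ∣ X ^ (2 * g) * (1 + X) ^ (2 * g) :=
    dvd_mul_of_dvd_left (pow_dvd_pow X (by omega)) _
  have h3 : (X : ℚ[X]) ^ 3 ∣ qnum g - 1 := by
    rw [show qnum g - 1 = ((1 + X ^ 3) ^ (2 * g) - 1) - X ^ (2 * g) * (1 + X) ^ (2 * g) from by
      unfold qnum; ring]
    exact dvd_sub h1 h2
  obtain ⟨t, ht⟩ := h3
  have he : qnum g = t * X ^ 3 + 1 := by
    have := sub_eq_iff_eq_add.mp ht
    rw [this]; ring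
  refine ⟨?_, ?_, ?_⟩ <;>
    rw [he, Polynomial.coeff_add, Polynomial.coeff_mul_X_pow'] <;>
      simp [Polynomial.coeff_one]

lemma qpoly_coeff (g : ℕ) (hg : 3 ≤ g) :
    (qpoly g).coeff 0 = 1 ∧ (qpoly g).coeff 1 = 0 ∧ (qpoly g).coeff 2 = 1 := by
  obtain ⟨n0, n1, n2⟩ := qnum_coeff g hg
  have hq := qden_mul g (by omega)
  have hd : qden = 1 - X ^ 2 - X ^ 4 + X ^ 6 := by unfold qden; ring
  have hd0 : qden.coeff 0 = 1 := by
    rw [hd]; simp [Polynomial.coeff_one, Polynomial.coeff_X_pow]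
  have hd1 : qden.coeff 1 = 0 := by
    rw [hd]; simp [Polynomial.coeff_one, Polynomial.coeff_X_pow]
  have hd2 : qden.coeff 2 = -1 := by
    rw [hd]; simp [Polynomial.coeff_one, Polynomial.coeff_X_pow]
  have h0 : (qden * qpoly g).coeff 0 = 1 := by rw [hq, n0]
  have h1 : (qden * qpoly g).coeff 1 = 0 := by rw [hq, n1]
  have h2 : (qden * qpoly g).coeff 2 = 0 := by rw [hq, n2]
  rw [Polynomial.mul_coeff_zero, hd0, one_mul] at h0
  rw [coeff_mul_one', hd0, hd1, h0] at h1
  rw [coeff_mul_two', hd0, hd1, hd2, h0] at h2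
  refine ⟨h0, by linarith, by linarith⟩


end Aux

/-- For all integers `g₁, g₂ ≥ 3`, the coefficient of `X²` in the polynomial representing
`P₁₂(g₁,g₂)` is `3`: the second Betti number of `M₁₂` equals `3`. -/
theorem P12_second_betti_three (g₁ g₂ : ℕ) (h₁ : 3 ≤ g₁) (h₂ : 3 ≤ g₂) (p : ℚ[X])
    (hp : algebraMap ℚ[X] (RatFunc ℚ) p = P12 g₁ g₂) :
    p.coeff 2 = 3 := by
  have hA := lemmaA g₁ g₂
  have hq1 : Qg g₁ = algebraMap ℚ[X] (RatFunc ℚ) (qpoly g₁) := Qg_eq g₁ (by omega)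
  have hq2 : Qg g₂ = algebraMap ℚ[X] (RatFunc ℚ) (qpoly g₂) := Qg_eq g₂ (by omega)
  set N : ℚ[X] := qpoly g₁ * ((1 - X ^ 4) * qpoly g₂ + (1 + X) ^ (2 * g₂) * X ^ (2 * g₂)
      + qpoly g₂ * X ^ 2 * (1 + 2 * X ^ 2 + X ^ 4)) with hNdef
  have hN : algebraMap ℚ[X] (RatFunc ℚ) N = P12 g₁ g₂ := by
    rw [hA, hq1, hq2]
    unfold Jg
    simp only [hNdef, map_mul, map_add, map_sub, map_pow, map_one, map_ofNat,
      RatFunc.algebraMap_X]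
  have hpN : p = N := RatFunc.algebraMap_injective ℚ (hp.trans hN.symm)
  obtain ⟨a0, a1, a2⟩ := qpoly_coeff g₁ h₁
  obtain ⟨b0, b1, b2⟩ := qpoly_coeff g₂ h₂
  -- coefficients of the second factor
  set W : ℚ[X] := (1 - X ^ 4) * qpoly g₂ + (1 + X) ^ (2 * g₂) * X ^ (2 * g₂)
      + qpoly g₂ * X ^ 2 * (1 + 2 * X ^ 2 + X ^ 4) with hWdef
  have hc0 : ((1 : ℚ[X]) - X ^ 4).coeff 0 = 1 := by
    simp [Polynomial.coeff_one, Polynomial.coeff_X_pow]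
  have hc1 : ((1 : ℚ[X]) - X ^ 4).coeff 1 = 0 := by
    simp [Polynomial.coeff_one, Polynomial.coeff_X_pow]
  have hc2 : ((1 : ℚ[X]) - X ^ 4).coeff 2 = 0 := by
    simp [Polynomial.coeff_one, Polynomial.coeff_X_pow]
  have hb : ∀ j, j ≤ 2 → (((1 : ℚ[X]) + X) ^ (2 * g₂) * X ^ (2 * g₂)).coeff j = 0 := by
    intro j hj
    rw [Polynomial.coeff_mul_X_pow', if_neg (by omega)]
  have hwc : qpoly g₂ * X ^ 2 * (1 + 2 * X ^ 2 + X ^ 4)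
      = (qpoly g₂ * (1 + 2 * X ^ 2 + X ^ 4)) * X ^ 2 := by ring
  have hW0 : W.coeff 0 = 1 := by
    simp only [hWdef, Polynomial.coeff_add]
    rw [Polynomial.mul_coeff_zero, hc0, b0, hb 0 (by omega), hwc,
      Polynomial.coeff_mul_X_pow', if_neg (by omega)]
    ring
  have hW1 : W.coeff 1 = 0 := by
    simp only [hWdef, Polynomial.coeff_add]
    rw [coeff_mul_one', hc0, hc1, b0, b1, hb 1 (by omega), hwc,
      Polynomial.coeff_mul_X_pow', if_neg (by omega)]
    ring
  have hW2 : W.coeff 2 = 2 := by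
    simp only [hWdef, Polynomial.coeff_add]
    rw [coeff_mul_two', hc0, hc1, hc2, b0, b1, b2, hb 2 (by omega), hwc,
      Polynomial.coeff_mul_X_pow', if_pos (by omega)]
    have : (qpoly g₂ * (1 + 2 * X ^ 2 + X ^ 4)).coeff 0 = 1 := by
      rw [Polynomial.mul_coeff_zero, b0]
      simp [Polynomial.coeff_one, Polynomial.coeff_X_pow]
    rw [show (2 : ℕ) - 2 = 0 from rfl, this]
    ring
  have hNW : N = qpoly g₁ * W := by rw [hNdef, hWdef]
  rw [hpN, hNW, coeff_mul_two', a0, a1, a2, hW0, hW1, hW2]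
  ring
end

section
/- For all integers g₁, g₂ ≥ 3, the coefficient of X³ in the polynomial representing P₁₂(g₁,g₂) is 2(g₁ + g₂); that is, the third Betti number of the component M₁₂ equals twice the arithmetic genus of the nodal curve. -/
open Polynomial

/-!
The correction terms of `P₁₂` built from `β̃₁` and `β̃₂` cancel identically, leaving
`P₁₂ = Q_{g₁} · (Q_{g₂} (1 + X²)(1 + X⁴) + J_{g₂} X^{2g₂})`. All factors are regular at `X = 0`,
so the coefficient of `X³` only depends on them modulo `X⁴`, which we measure with the `X`-adic
valuation of `ℚ(X)`. Modulo `X⁴` one has `Q_g ≡ 1 + X² + 2g X³` (because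
`(1 + X³)^{2g} ≡ 1 + 2g X³` and `(1 - X²)(1 - X⁴) ≡ 1 - X²`) and `J_{g₂} X^{2g₂} ≡ 0`, and the
`X³`-coefficient of `(1 + X² + 2g₁X³)(1 + X² + 2g₂X³)(1 + X²)(1 + X⁴)` is `2(g₁ + g₂)`.
-/

open IsDedekindDomain.HeightOneSpectrum WithZero

theorem Valuation.map_mul_sub_mul_le {R Γ₀ : Type*} [Ring R] [LinearOrderedCommMonoidWithZero Γ₀]
    (v : Valuation R Γ₀) {a a' b b' : R} {γ : Γ₀} (ha : v a ≤ 1) (hb' : v b' ≤ 1)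
    (haa' : v (a - a') ≤ γ) (hbb' : v (b - b') ≤ γ) : v (a * b - a' * b') ≤ γ := by
  rw [show a * b - a' * b' = a * (b - b') + (a - a') * b' by noncomm_ring]
  refine v.map_add_le ?_ ?_ <;> rw [v.map_mul]
  · exact (mul_le_mul' ha hbb').trans_eq (one_mul γ)
  · exact (mul_le_mul' haa' hb').trans_eq (mul_one γ)

section XAdic

variable {K : Type*} [Field K]

variable (K) in
noncomputable abbrev valX : Valuation (RatFunc K) ℤᵐ⁰ := (idealX K).valuation (RatFunc K)

theorem valX_X_le_one : valX K RatFunc.X ≤ 1 := by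
  rw [valuation_X_eq_neg_one, ← exp_zero, exp_le_exp]
  norm_num

theorem valX_algebraMap_le_one (p : K[X]) : valX K (algebraMap K[X] (RatFunc K) p) ≤ 1 :=
  valuation_le_one _ p

theorem valX_algebraMap_le_iff (p : K[X]) (n : ℕ) :
    valX K (algebraMap K[X] (RatFunc K) p) ≤ valX K RatFunc.X ^ n ↔ X ^ n ∣ p := by
  rw [valuation_of_algebraMap, valuation_X_eq_neg_one, ← exp_nsmul, smul_neg, nsmul_one,
    intValuation_le_pow_iff_dvd, idealX_span, Ideal.span_singleton_pow, Ideal.dvd_span_singleton,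
    Ideal.mem_span_singleton]

theorem valX_algebraMap_eq_one {p : K[X]} (hp : p.coeff 0 ≠ 0) :
    valX K (algebraMap K[X] (RatFunc K) p) = 1 := by
  rwa [valuation_of_algebraMap, intValuation_eq_one_iff, idealX_span, Ideal.mem_span_singleton,
    X_dvd_iff]

theorem algebraMap_ne_zero_of_coeff_zero_ne_zero {p : K[X]} (hp : p.coeff 0 ≠ 0) :
    algebraMap K[X] (RatFunc K) p ≠ 0 := by
  intro h
  simpa [h] using valX_algebraMap_eq_one hp

theorem coeff_eq_of_valX_sub_le {p q : K[X]} {n k : ℕ}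
    (h : valX K (algebraMap K[X] (RatFunc K) p - algebraMap K[X] (RatFunc K) q) ≤
      valX K RatFunc.X ^ n) (hk : k < n) : p.coeff k = q.coeff k := by
  rw [← map_sub, valX_algebraMap_le_iff] at h
  obtain ⟨c, hc⟩ := h
  rw [← sub_eq_zero, ← coeff_sub, hc, coeff_X_pow_mul', if_neg (by omega)]

end XAdic

section Truncation

variable {R : Type*} [CommRing R]

noncomputable def qgTrunc (g : ℕ) : R[X] := 1 + X ^ 2 + C (2 * g : R) * X ^ 3

theorem X_pow_four_dvd_Qg_num_sub {g : ℕ} (hg : 2 ≤ g) :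
    (X ^ 4 : R[X]) ∣ (1 + X ^ 3) ^ (2 * g) - X ^ (2 * g) * (1 + X) ^ (2 * g) -
      (1 - X ^ 2) * (1 - X ^ 4) * qgTrunc g := by
  have hbinom : (X ^ 4 : R[X]) ∣ (1 + X ^ 3) ^ (2 * g) - X ^ 3 * ((2 * g : ℕ) : R[X]) - 1 := by
    have h := sq_dvd_add_pow_sub_sub (X ^ 3 : R[X]) 1 (2 * g)
    rw [one_pow, one_pow, one_mul, ← pow_mul] at h
    exact (pow_dvd_pow X (by norm_num)).trans h
  have htail : (X ^ 4 : R[X]) ∣ X ^ (2 * g) * (1 + X) ^ (2 * g) :=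
    (pow_dvd_pow X (by omega)).mul_right _
  have hprod : (X ^ 4 : R[X]) ∣
      (1 - X ^ 2) * (1 - X ^ 4) * qgTrunc g - 1 - X ^ 3 * ((2 * g : ℕ) : R[X]) :=
    ⟨-2 - C (2 * g : R) * X - C (2 * g : R) * X ^ 3 + X ^ 4 + C (2 * g : R) * X ^ 5, by
      rw [qgTrunc, ← C_eq_natCast, Nat.cast_mul, Nat.cast_ofNat]; ring⟩
  convert (hbinom.sub htail).sub hprod using 1
  ring

theorem coeff_three_qgTrunc_mul (g₁ g₂ : ℕ) :
    ((qgTrunc g₁ * (qgTrunc g₂ * ((1 + X ^ 2) * (1 + X ^ 4)))) : R[X]).coeff 3 =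
      2 * ((g₁ : R) + g₂) := by
  simp only [qgTrunc, mul_add, add_mul, one_mul, mul_one, coeff_add, ← pow_add, mul_assoc,
    coeff_C_mul, coeff_X_pow, coeff_one, X_pow_mul]
  norm_num

end Truncation

theorem valX_Qg_sub_le {g : ℕ} (hg : 2 ≤ g) :
    valX ℚ (Qg g - algebraMap ℚ[X] (RatFunc ℚ) (qgTrunc g)) ≤ valX ℚ RatFunc.X ^ 4 := by
  have hden : ((1 - X ^ 2) * (1 - X ^ 4) : ℚ[X]).coeff 0 ≠ 0 := by simp [mul_coeff_zero]
  have hQg : Qg g =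
      algebraMap ℚ[X] (RatFunc ℚ) ((1 + X ^ 3) ^ (2 * g) - X ^ (2 * g) * (1 + X) ^ (2 * g)) /
        algebraMap ℚ[X] (RatFunc ℚ) ((1 - X ^ 2) * (1 - X ^ 4)) := by
    simp only [Qg, map_sub, map_mul, map_add, map_pow, map_one, RatFunc.algebraMap_X]
  rw [hQg, div_sub' (algebraMap_ne_zero_of_coeff_zero_ne_zero hden), ← map_mul, ← map_sub,
    map_div₀, valX_algebraMap_eq_one hden, div_one, valX_algebraMap_le_iff]
  exact X_pow_four_dvd_Qg_num_sub hg

theorem valX_Qg_le_one {g : ℕ} (hg : 2 ≤ g) : valX ℚ (Qg g) ≤ 1 := by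
  rw [← sub_add_cancel (Qg g) (algebraMap ℚ[X] (RatFunc ℚ) (qgTrunc g))]
  exact (valX ℚ).map_add_le ((valX_Qg_sub_le hg).trans (pow_le_one' valX_X_le_one 4))
    (valX_algebraMap_le_one _)

theorem P12_eq_Qg_mul (g₁ g₂ : ℕ) :
    P12 g₁ g₂ = Qg g₁ * (Qg g₂ * ((1 + RatFunc.X ^ 2) * (1 + RatFunc.X ^ 4)) +
      Jg g₂ * RatFunc.X ^ (2 * g₂)) := by
  have h₁ := algebraMap_ne_zero_of_coeff_zero_ne_zero (K := ℚ) (p := 1 + X ^ 2) (by simp)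
  have h₂ := algebraMap_ne_zero_of_coeff_zero_ne_zero (K := ℚ) (p := 1 - X ^ 4) (by simp)
  simp only [map_add, map_sub, map_one, map_pow, RatFunc.algebraMap_X] at h₁ h₂
  simp only [P12, betaT1, betaT2]
  field_simp
  ring

theorem valX_P12_sub_le {g₁ g₂ : ℕ} (h₁ : 2 ≤ g₁) (h₂ : 2 ≤ g₂) :
    valX ℚ (P12 g₁ g₂ - algebraMap ℚ[X] (RatFunc ℚ)
      (qgTrunc g₁ * (qgTrunc g₂ * ((1 + X ^ 2) * (1 + X ^ 4))))) ≤ valX ℚ RatFunc.X ^ 4 := by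
  have hfactor : (1 + RatFunc.X ^ 2) * (1 + RatFunc.X ^ 4) =
      algebraMap ℚ[X] (RatFunc ℚ) ((1 + X ^ 2) * (1 + X ^ 4)) := by
    simp only [map_mul, map_add, map_pow, map_one, RatFunc.algebraMap_X]
  have htail : Jg g₂ * RatFunc.X ^ (2 * g₂) =
      algebraMap ℚ[X] (RatFunc ℚ) (X ^ (2 * g₂) * (1 + X) ^ (2 * g₂)) := by
    simp only [Jg, map_mul, map_add, map_pow, map_one, RatFunc.algebraMap_X, mul_comm]
  rw [P12_eq_Qg_mul, hfactor, htail, map_mul _ (qgTrunc g₁)]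
  refine (valX ℚ).map_mul_sub_mul_le (valX_Qg_le_one h₁) (valX_algebraMap_le_one _)
    (valX_Qg_sub_le h₁) ?_
  rw [map_mul _ (qgTrunc g₂), add_sub_right_comm, ← sub_mul]
  refine (valX ℚ).map_add_le ?_ ((valX_algebraMap_le_iff _ 4).2 ?_)
  · rw [map_mul]
    exact (mul_le_mul' (valX_Qg_sub_le h₂) (valX_algebraMap_le_one _)).trans_eq (mul_one _)
  · exact (pow_dvd_pow X (by omega)).mul_right _

/-- For all integers `g₁, g₂ ≥ 3`, the coefficient of `X³` in the polynomial representing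
`P₁₂(g₁,g₂)` is `2(g₁ + g₂)`: the third Betti number of `M₁₂` equals twice the
arithmetic genus of the nodal curve. -/
theorem P12_third_betti (g₁ g₂ : ℕ) (h₁ : 3 ≤ g₁) (h₂ : 3 ≤ g₂) (p : ℚ[X])
    (hp : algebraMap ℚ[X] (RatFunc ℚ) p = P12 g₁ g₂) :
    p.coeff 3 = 2 * ((g₁ : ℚ) + (g₂ : ℚ)) := by
  have hP := valX_P12_sub_le (show 2 ≤ g₁ by omega) (show 2 ≤ g₂ by omega)
  rw [← hp] at hP
  rw [coeff_eq_of_valX_sub_le hP (by norm_num), coeff_three_qgTrunc_mul]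
end
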